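/- arXiv:2411.02087 — 2 statements merged into one kernel-verified Lean document; each statement's English description precedes it below -/
import Mathlib

section
/- Let 0 < γ ≤ 1/64, λ = √8 + γ, Δ = √(λ² − 8), and let i be a positive integer with i ≤ γ^{-1/2}/8. Then 1 + iΔ/(λ−Δ) ≤ ((λ+Δ)/(λ−Δ))^i ≤ 1 + 4iΔ/(λ−Δ). -/
lemma pow_le_one_add_two_mul (x : ℝ) (hx : 0 ≤ x) :
    ∀ i : ℕ, (i : ℝ) * x ≤ 1 / 2 → (1 + x) ^ i ≤ 1 + 2 * i * x := by
  intro i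
  induction i with
  | zero => simp
  | succ n ih =>
    intro h
    have hn : (n : ℝ) * x ≤ 1 / 2 := by
      have : (n : ℝ) ≤ (n + 1 : ℕ) := by push_cast; linarith
      nlinarith [Nat.cast_nonneg (α := ℝ) n]
    have h1 : (1 + x) ^ (n + 1) = (1 + x) ^ n * (1 + x) := by ring
    have h2 : (1 + x) ^ n ≤ 1 + 2 * n * x := ih hn
    have hpos : (0 : ℝ) ≤ 1 + x := by linarith
    have h3 : (1 + x) ^ (n + 1) ≤ (1 + 2 * n * x) * (1 + x) := by
      rw [h1]; exact mul_le_mul_of_nonneg_right h2 hpos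
    have h2nx : 2 * (n : ℝ) * x ≤ 1 := by
      have hcast : (n : ℝ) + 1 = ((n + 1 : ℕ) : ℝ) := by push_cast; ring
      nlinarith
    push_cast
    nlinarith [mul_nonneg (Nat.cast_nonneg (α := ℝ) n) hx, sq_nonneg x]

set_option maxHeartbeats 1000000 in
theorem pow_ratio_bounds (γ : ℝ) (h0 : 0 < γ) (h1 : γ ≤ 1 / 64) (i : ℕ) (hi : 1 ≤ i)
    (hile : (i : ℝ) ≤ γ ^ (-(1 / 2 : ℝ)) / 8) :
    (1 + (i : ℝ) * Real.sqrt ((Real.sqrt 8 + γ) ^ 2 - 8) /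
        (Real.sqrt 8 + γ - Real.sqrt ((Real.sqrt 8 + γ) ^ 2 - 8)) ≤
      ((Real.sqrt 8 + γ + Real.sqrt ((Real.sqrt 8 + γ) ^ 2 - 8)) /
        (Real.sqrt 8 + γ - Real.sqrt ((Real.sqrt 8 + γ) ^ 2 - 8))) ^ i) ∧
    ((Real.sqrt 8 + γ + Real.sqrt ((Real.sqrt 8 + γ) ^ 2 - 8)) /
        (Real.sqrt 8 + γ - Real.sqrt ((Real.sqrt 8 + γ) ^ 2 - 8))) ^ i ≤
      1 + 4 * (i : ℝ) * Real.sqrt ((Real.sqrt 8 + γ) ^ 2 - 8) /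
        (Real.sqrt 8 + γ - Real.sqrt ((Real.sqrt 8 + γ) ^ 2 - 8)) := by
  set s := Real.sqrt 8 with hs
  set Δ := Real.sqrt ((s + γ) ^ 2 - 8) with hΔ
  -- bounds on √8
  have hs8 : s ^ 2 = 8 := Real.sq_sqrt (by norm_num)
  have hslb : (2.82 : ℝ) ≤ s := by
    have : Real.sqrt (2.82 ^ 2) ≤ Real.sqrt 8 := Real.sqrt_le_sqrt (by norm_num)
    rwa [Real.sqrt_sq (by norm_num)] at this
  have hsub : s ≤ 2.83 := by
    rw [hs]
    have : Real.sqrt 8 ≤ Real.sqrt (2.83 ^ 2) := Real.sqrt_le_sqrt (by norm_num)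
    rwa [Real.sqrt_sq (by norm_num)] at this
  -- Δ properties
  have harg : (s + γ) ^ 2 - 8 = γ * (2 * s + γ) := by ring_nf; nlinarith
  have hargnn : 0 ≤ (s + γ) ^ 2 - 8 := by nlinarith
  have hΔnn : 0 ≤ Δ := Real.sqrt_nonneg _
  have hΔsq : Δ ^ 2 = (s + γ) ^ 2 - 8 := Real.sq_sqrt hargnn
  have hsqγ : Real.sqrt γ ^ 2 = γ := Real.sq_sqrt h0.le
  have hsqγnn : 0 < Real.sqrt γ := Real.sqrt_pos.mpr h0
  have hsqγle : Real.sqrt γ ≤ 1 / 8 := by nlinarith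
  have hΔle : Δ ≤ 4 * Real.sqrt γ := by nlinarith [sq_nonneg (Δ - 4 * Real.sqrt γ), sq_nonneg (Δ + 4 * Real.sqrt γ)]
  have hΔhalf : Δ ≤ 1 / 2 := by nlinarith
  have hden : (2 : ℝ) ≤ s + γ - Δ := by nlinarith
  have hdenpos : (0 : ℝ) < s + γ - Δ := by linarith
  clear_value s Δ
  -- i bound
  have hrpow : γ ^ (-(1 / 2 : ℝ)) = (Real.sqrt γ)⁻¹ := by
    rw [Real.rpow_neg h0.le, Real.sqrt_eq_rpow]
  have hiΔ : (i : ℝ) * Δ ≤ 1 / 2 := by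
    have hile' : (i : ℝ) ≤ (Real.sqrt γ)⁻¹ / 8 := by rwa [hrpow] at hile
    have hinn : (0 : ℝ) ≤ i := Nat.cast_nonneg i
    have : (i : ℝ) * Δ ≤ ((Real.sqrt γ)⁻¹ / 8) * (4 * Real.sqrt γ) :=
      mul_le_mul hile' hΔle hΔnn (by positivity)
    rw [div_mul_eq_mul_div, inv_mul_eq_div] at this
    calc (i : ℝ) * Δ ≤ 4 * Real.sqrt γ / Real.sqrt γ / 8 := this
      _ = 1 / 2 := by field_simp; norm_num
  -- rewrite ratio as 1 + x
  set x := 2 * Δ / (s + γ - Δ) with hx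
  clear_value x
  have hxnn : 0 ≤ x := by rw [hx]; positivity
  have hratio : (s + γ + Δ) / (s + γ - Δ) = 1 + x := by
    field_simp [hx]
    have key : x * (s + γ - Δ) = 2 * Δ := by rw [hx]; exact div_mul_cancel₀ _ hdenpos.ne'
    linear_combination (-1 : ℝ) * key
  have hix : (i : ℝ) * x ≤ 1 / 2 := by
    rw [hx]
    rw [mul_div_assoc']
    rw [div_le_iff₀ hdenpos]
    nlinarith
  constructor
  · -- lower bound
    have hber : 1 + (i : ℝ) * x ≤ (1 + x) ^ i := by
      have := one_add_mul_le_pow (a := x) (by linarith) i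
      linarith
    rw [hratio]
    have hinn : (0 : ℝ) ≤ i := Nat.cast_nonneg i
    have : (i : ℝ) * Δ / (s + γ - Δ) ≤ (i : ℝ) * x := by
      rw [hx, mul_div_assoc']
      rw [div_le_div_iff₀ hdenpos hdenpos]
      nlinarith [mul_nonneg (mul_nonneg hinn hΔnn) hdenpos.le]
    linarith
  · rw [hratio]
    have := pow_le_one_add_two_mul x hxnn i hix
    have heq : 4 * (i : ℝ) * Δ / (s + γ - Δ) = 2 * i * x := by
      rw [hx]; field_simp; ring
    linarith
end

section
/- Let n ≥ 1 be an integer, 0 < γ ≤ 1/64 with n + 2 ≤ γ^{-1/2}/16, λ = √8 + γ, Δ = √(λ² − 8). Set ρ = (λ+Δ)/(λ−Δ). Then 1 + 1/(2(n+1)) ≤ (1 − ρ^{n+2})/(1 − ρ^{n+1}) ≤ 1 + 4/(n+1). -/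
lemma ratio_aux (m : ℕ) (hm : 2 ≤ m) (x : ℝ) (hx : 0 < x) (hmx : (m:ℝ) * x ≤ 3/16) :
    1 + 1/(2*(m:ℝ)) ≤ ((1+x)^(m+1) - 1)/((1+x)^m - 1) ∧
    ((1+x)^(m+1) - 1)/((1+x)^m - 1) ≤ 1 + 4/(m:ℝ) := by
  have hm0 : (0:ℝ) < m := by positivity
  have hm2 : (2:ℝ) ≤ m := by exact_mod_cast hm
  have hxle : x ≤ 3/32 := by nlinarith [mul_le_mul_of_nonneg_right hm2 hx.le]
  set ρ : ℝ := 1 + x with hρ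
  have hρ1 : 1 ≤ ρ := by simp [hρ]; linarith
  -- Bernoulli lower
  have hber : ∀ k : ℕ, 1 + (k:ℝ) * x ≤ ρ ^ k := by
    intro k
    exact one_add_mul_le_pow (by linarith) k
  -- (1-x)^m ≥ 1 - m x
  have hber2 : 1 - (m:ℝ) * x ≤ (1 - x) ^ m := by
    have := one_add_mul_le_pow (a := -x) (by linarith) m
    simpa [sub_eq_add_neg, mul_comm] using this
  have h1x : (0:ℝ) < 1 - x := by linarith
  have hprod : (1 - x)^m * ρ^m ≤ 1 := by
    have : (1-x) * ρ ≤ 1 := by nlinarith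
    calc (1-x)^m * ρ^m = ((1-x)*ρ)^m := (mul_pow _ _ _).symm
      _ ≤ 1^m := pow_le_pow_left₀ (by positivity) this m
      _ = 1 := one_pow m
  have hρm2 : ρ ^ m ≤ 2 := by
    have hρmpos : (0:ℝ) < ρ ^ m := by positivity
    nlinarith [hber2, hprod, hmx]
  have key : ∀ k : ℕ, k ≤ m → ρ ^ k ≤ 1 + 2 * k * x := by
    intro k hk
    induction k with
    | zero => simp
    | succ k ih =>
      have hk' : k ≤ m := Nat.le_of_succ_le hk
      have ih' := ih hk'
      have hle : ρ ^ k ≤ 2 := le_trans (pow_le_pow_right₀ hρ1 hk') hρm2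
      have : ρ ^ (k+1) = ρ ^ k + x * ρ ^ k := by rw [pow_succ]; ring
      rw [this]
      have : x * ρ ^ k ≤ x * 2 := by nlinarith
      push_cast
      linarith
  have hdpos : 0 < ρ ^ m - 1 := by
    have := hber m
    nlinarith
  have hdle : ρ ^ m - 1 ≤ 2 * m * x := by linarith [key m le_rfl]
  have hdge : (m:ℝ) * x ≤ ρ ^ m - 1 := by linarith [hber m]
  have hratio : (ρ^(m+1) - 1)/(ρ^m - 1) = ρ + x/(ρ^m - 1) := by
    field_simp
    ring_nf
    linarith
  rw [hratio]
  constructor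
  · have : 1/(2*(m:ℝ)) ≤ x/(ρ^m - 1) := by
      rw [div_le_div_iff₀ (by positivity) hdpos]
      nlinarith
    linarith
  · have h1 : x/(ρ^m - 1) ≤ 1/(m:ℝ) := by
      rw [div_le_div_iff₀ hdpos hm0]
      nlinarith
    have h2 : x ≤ 3/(16*(m:ℝ)) := by
      rw [le_div_iff₀ (by positivity)]
      nlinarith
    have : ρ ≤ 1 + 3/(16*m) := by simp [hρ]; linarith
    have h3 : 3/(16*(m:ℝ)) + 1/(m:ℝ) ≤ 4/(m:ℝ) := by
      rw [div_add_div _ _ (by positivity) (by positivity), div_le_div_iff₀ (by positivity) hm0]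
      ring_nf
      nlinarith
    linarith
set_option maxHeartbeats 1000000 in

theorem ratio_of_powers_bounds (n : ℕ) (hn : 1 ≤ n) (γ : ℝ) (h0 : 0 < γ) (h1 : γ ≤ 1 / 64)
    (hng : (n : ℝ) + 2 ≤ γ ^ (-(1 / 2 : ℝ)) / 16) :
    1 + 1 / (2 * ((n : ℝ) + 1)) ≤
      (1 - (((Real.sqrt 8 + γ) + Real.sqrt ((Real.sqrt 8 + γ) ^ 2 - 8)) /
          ((Real.sqrt 8 + γ) - Real.sqrt ((Real.sqrt 8 + γ) ^ 2 - 8))) ^ (n + 2)) /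
        (1 - (((Real.sqrt 8 + γ) + Real.sqrt ((Real.sqrt 8 + γ) ^ 2 - 8)) /
          ((Real.sqrt 8 + γ) - Real.sqrt ((Real.sqrt 8 + γ) ^ 2 - 8))) ^ (n + 1)) ∧
    (1 - (((Real.sqrt 8 + γ) + Real.sqrt ((Real.sqrt 8 + γ) ^ 2 - 8)) /
          ((Real.sqrt 8 + γ) - Real.sqrt ((Real.sqrt 8 + γ) ^ 2 - 8))) ^ (n + 2)) /
        (1 - (((Real.sqrt 8 + γ) + Real.sqrt ((Real.sqrt 8 + γ) ^ 2 - 8)) /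
          ((Real.sqrt 8 + γ) - Real.sqrt ((Real.sqrt 8 + γ) ^ 2 - 8))) ^ (n + 1)) ≤
      1 + 4 / ((n : ℝ) + 1) := by
  set s := Real.sqrt 8 with hs
  have hs2 : s ^ 2 = 8 := Real.sq_sqrt (by norm_num)
  have hs0 : 0 ≤ s := Real.sqrt_nonneg 8
  have hslb : 2.8 ≤ s := by nlinarith
  have hsub : s ≤ 3 := by nlinarith
  set g := Real.sqrt γ with hg
  have hg2 : g ^ 2 = γ := Real.sq_sqrt h0.le
  have hg0 : 0 < g := Real.sqrt_pos.mpr h0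
  have hg8 : g ≤ 1/8 := by nlinarith
  have hl28 : (s + γ) ^ 2 - 8 = 2*s*γ + γ^2 := by linear_combination hs2
  set D := Real.sqrt ((s + γ) ^ 2 - 8) with hD
  have hD0 : 0 ≤ D := Real.sqrt_nonneg _
  have hD2 : D ^ 2 = 2*s*γ + γ^2 := by
    rw [hD, Real.sq_sqrt (by nlinarith), hl28]
  have hDpos : 0 < D := by
    rw [hD]; exact Real.sqrt_pos.mpr (by nlinarith)
  have hD3 : D ≤ 3 * g := by nlinarith
  have hlD : 2 ≤ (s + γ) - D := by linarith
  have hrw : γ ^ (-(1/2:ℝ)) = g⁻¹ := by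
    rw [Real.rpow_neg h0.le, hg, Real.sqrt_eq_rpow]
  rw [hrw] at hng
  have hng2 : ((n:ℝ) + 2) * g ≤ 1/16 := by
    have := mul_le_mul_of_nonneg_right hng hg0.le
    rw [div_mul_eq_mul_div, inv_mul_cancel₀ (ne_of_gt hg0)] at this
    linarith
  set x := 2 * D / ((s + γ) - D) with hx
  have hxpos : 0 < x := by positivity
  have hxleD : x ≤ D := by
    rw [hx, div_le_iff₀ (by linarith)]
    nlinarith
  have hmx : ((n:ℝ) + 1) * x ≤ 3/16 := by
    have h1' : ((n:ℝ) + 1) * x ≤ ((n:ℝ) + 1) * (3*g) := by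
      apply mul_le_mul_of_nonneg_left (by linarith) (by positivity)
    have h2' : ((n:ℝ) + 1) * (3*g) ≤ 3 * (((n:ℝ)+2) * g) := by nlinarith
    linarith
  have hρeq : ((s + γ) + D) / ((s + γ) - D) = 1 + x := by
    rw [hx]
    field_simp
    ring
  rw [hρeq]
  have hm : 2 ≤ n + 1 := by omega
  have hmx' : ((n + 1 : ℕ) : ℝ) * x ≤ 3/16 := by push_cast; exact hmx
  obtain ⟨hlow, hhigh⟩ := ratio_aux (n+1) hm x hxpos hmx'
  have hcast : ((n + 1 : ℕ) : ℝ) = (n:ℝ) + 1 := by push_cast; ring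
  rw [hcast] at hlow hhigh
  have hflip : (1 - (1+x)^(n+2)) / (1 - (1+x)^(n+1))
      = ((1+x)^(n+1+1) - 1) / ((1+x)^(n+1) - 1) := by
    rw [show n+1+1 = n+2 from rfl, ← neg_div_neg_eq]
    ring_nf
  rw [hflip]
  exact ⟨hlow, hhigh⟩
end
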